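/- Let γ : ℝ^n → ℝ be γ(x) = h⊤x − 1, let ê₁, …, ê_{N_s} ∈ ℝ^n be samples, α ∈ (0,1), ε ≥ 0, and let 1/p + 1/q = 1. Suppose there exist τ ∈ ℝ, λ ≥ 0, and s₁, …, s_{N_s} ≥ 0 such that −ατ + ελ + (1/N_s) Σ_j s_j ≤ 0, (γ(z + ê_j) + τ)_+ ≤ s_j for all j, and ‖h‖_p ≤ λ. Then inf_{τ' ∈ ℝ} [ −ατ' + λε + (1/N_s) Σ_j sup_{e ∈ ℝ^n} ( (γ(z+e) + τ')_+ − λ‖e − ê_j‖_q ) ] ≤ 0. -/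

import Mathlib

/-!
Choose `τ' = τ`. Hölder's inequality and `‖h‖_p ≤ λ` make `e ↦ h⊤e` `λ`-Lipschitz for the
`q`-norm, so moving the sample `ê_j` to `e` raises the loss `(γ(z + e) + τ)_+` by at most the
transport penalty `λ‖e - ê_j‖_q`. Hence each inner supremum is at most `(γ(z + ê_j) + τ)_+ ≤ s_j`,
and the first certificate inequality bounds the objective at `τ` by `0`.
-/

/-- The `q`-norm on `ℝ^n`. -/
noncomputable def qnorm {n : ℕ} (q : ℝ) (x : Fin n → ℝ) : ℝ :=
  (∑ i, |x i| ^ q) ^ (1 / q)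

open Finset

lemma Real.holderConjugate_of_one_le {p q : ℝ} (hp : 1 ≤ p) (hq : 1 ≤ q)
    (hpq : 1 / p + 1 / q = 1) : p.HolderConjugate q := by
  refine Real.holderConjugate_iff.2 ⟨lt_of_le_of_ne hp ?_, by simpa only [one_div] using hpq⟩
  rintro rfl
  have hq0 : 1 / q = 0 := by linarith
  simp only [one_div, inv_eq_zero] at hq0
  linarith

section qnorm

variable {n : ℕ}

lemma qnorm_nonneg (q : ℝ) (x : Fin n → ℝ) : 0 ≤ qnorm q x := by
  unfold qnorm
  positivity

lemma sum_mul_le_qnorm_mul_qnorm {p q : ℝ} (hpq : p.HolderConjugate q) (f g : Fin n → ℝ) :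
    ∑ i, f i * g i ≤ qnorm p f * qnorm q g := by
  simpa only [qnorm] using Real.inner_le_Lp_mul_Lq univ f g hpq

lemma sum_mul_le_sum_mul_add_mul_qnorm {p q lam : ℝ} (hpq : p.HolderConjugate q)
    {h : Fin n → ℝ} (hlam : qnorm p h ≤ lam) (x y : Fin n → ℝ) :
    ∑ i, h i * x i ≤ ∑ i, h i * y i + lam * qnorm q (fun i => x i - y i) := by
  have hxy : ∑ i, h i * x i = ∑ i, h i * y i + ∑ i, h i * (x i - y i) := by
    rw [← sum_add_distrib]
    exact sum_congr rfl fun i _ => by ring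
  rw [hxy, add_le_add_iff_left]
  exact (sum_mul_le_qnorm_mul_qnorm hpq h _).trans
    (mul_le_mul_of_nonneg_right hlam (qnorm_nonneg q _))

end qnorm

lemma ciSup_max_sub_le {ι : Type*} [Nonempty ι] {f d : ι → ℝ} {a : ℝ} (hd : ∀ i, 0 ≤ d i)
    (hf : ∀ i, f i ≤ a + d i) : ⨆ i, (max (f i) 0 - d i) ≤ max a 0 :=
  ciSup_le fun i => sub_le_iff_le_add.2 <|
    max_le (by linarith [hf i, le_max_left a 0]) (by linarith [hd i, le_max_right a 0])

theorem certificates_imply_dual_cvar_constraint_general {n : ℕ} (Ns : ℕ)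
    (p q : ℝ) (hp : 1 ≤ p) (hq : 1 ≤ q) (hpq : 1 / p + 1 / q = 1)
    (h z : Fin n → ℝ) (ehat : Fin Ns → Fin n → ℝ)
    (α : ℝ) (ε : ℝ)
    (τ lam : ℝ) (s : Fin Ns → ℝ)
    (h1 : -α * τ + ε * lam + (1 / (Ns : ℝ)) * ∑ j, s j ≤ 0)
    (h2 : ∀ j, max ((∑ i, h i * (z i + ehat j i)) - 1 + τ) 0 ≤ s j)
    (h3 : qnorm p h ≤ lam) :
    (⨅ τ' : ℝ, (-α * τ' + lam * ε + (1 / (Ns : ℝ)) * ∑ j,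
        ⨆ e : Fin n → ℝ,
          (max ((∑ i, h i * (z i + e i)) - 1 + τ') 0
            - lam * qnorm q (fun i => e i - ehat j i)))) ≤ 0 := by
  have hconj := Real.holderConjugate_of_one_le hp hq hpq
  have hlam : 0 ≤ lam := (qnorm_nonneg p h).trans h3
  have hsup : ∀ j, ⨆ e : Fin n → ℝ, (max ((∑ i, h i * (z i + e i)) - 1 + τ) 0
      - lam * qnorm q (fun i => e i - ehat j i)) ≤ s j := by
    refine fun j => (ciSup_max_sub_le (fun _ => mul_nonneg hlam (qnorm_nonneg q _))
      fun e => ?_).trans (h2 j)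
    have := sum_mul_le_sum_mul_add_mul_qnorm hconj h3 (z + e) (z + ehat j)
    simp only [Pi.add_apply, add_sub_add_left_eq_sub] at this
    linarith
  -- No lower bound on the objective is needed: in `ℝ` an unbounded-below infimum is `0`.
  refine Real.iInf_nonpos' ⟨τ, h1.trans' ?_⟩
  rw [mul_comm lam ε]
  gcongr with j
  exact hsup j

/-- Feasibility direction of the tractable DR-CVaR reformulation: existence of
certificates `(τ, λ, s)` for the epigraph constraints implies that the dualized
worst-case CVaR constraint holds. -/
theorem certificates_imply_dual_cvar_constraint {n : ℕ} (Ns : ℕ) (hNs : 0 < Ns)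
    (p q : ℝ) (hp : 1 ≤ p) (hq : 1 ≤ q) (hpq : 1 / p + 1 / q = 1)
    (h z : Fin n → ℝ) (ehat : Fin Ns → Fin n → ℝ)
    (α : ℝ) (hα : α ∈ Set.Ioo (0 : ℝ) 1) (ε : ℝ) (hε : 0 ≤ ε)
    (τ lam : ℝ) (hlam : 0 ≤ lam) (s : Fin Ns → ℝ) (hs : ∀ j, 0 ≤ s j)
    (h1 : -α * τ + ε * lam + (1 / (Ns : ℝ)) * ∑ j, s j ≤ 0)
    (h2 : ∀ j, max ((∑ i, h i * (z i + ehat j i)) - 1 + τ) 0 ≤ s j)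
    (h3 : qnorm p h ≤ lam) :
    (⨅ τ' : ℝ, (-α * τ' + lam * ε + (1 / (Ns : ℝ)) * ∑ j,
        ⨆ e : Fin n → ℝ,
          (max ((∑ i, h i * (z i + e i)) - 1 + τ') 0
            - lam * qnorm q (fun i => e i - ehat j i)))) ≤ 0 :=
  certificates_imply_dual_cvar_constraint_general Ns p q hp hq hpq h z ehat α ε τ lam s h1 h2 h3
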